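/- Let X₁, …, Xₙ be i.i.d. random variables, each exponentially distributed with rate parameter λ > 0 (representing the interarrival times of a Poisson process with arrival rate λ). Define the estimator λ̂ = n / (∑_{i=1}^n Xᵢ). Then for every ε ∈ (0,1), the probability Pr{ |λ̂ − λ| / λ < ε } equals g(n, n/(1+ε)) − g(n, n/(1−ε)), where g(m, x) = e^{−x} ∑_{i=0}^{m−1} xⁱ/i!. -/

import Mathlib

/-!
The sum `S = ∑ Xᵢ` of `n` independent `Exp(λ)` variables has the Erlang (= Gamma(`n`, `λ`))
law: convolving the density `λⁿ xⁿ⁻¹ e^{-λx} / (n-1)!` with `λ e^{-λx}` raises `n` by one.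
The event `|n / S - λ| / λ < ε` is `S ∈ (n / ((1 + ε) λ), n / ((1 - ε) λ))`, and
`x ↦ -g(n, λx)` is an antiderivative of the Erlang density, since in `d/dx g(n, x)` the sum
telescopes to `-e^{-x} xⁿ⁻¹ / (n-1)!`.
-/

open MeasureTheory ProbabilityTheory

noncomputable def g (m : ℕ) (x : ℝ) : ℝ :=
  Real.exp (-x) * ∑ i ∈ Finset.range m, x ^ i / (Nat.factorial i)

open Set
open scoped Nat

lemma g_succ (m : ℕ) (x : ℝ) :
    g (m + 1) x = g m x + Real.exp (-x) * (x ^ m / m !) := by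
  simp only [g, Finset.sum_range_succ, mul_add]

lemma hasDerivAt_g_succ (m : ℕ) (x : ℝ) :
    HasDerivAt (g (m + 1)) (-(Real.exp (-x) * x ^ m / m !)) x := by
  induction m with
  | zero =>
    have : g 1 = fun y ↦ Real.exp (-y) := funext fun y ↦ by simp [g]
    simpa [this] using (hasDerivAt_neg x).exp
  | succ m ih =>
    rw [show g (m + 1 + 1) = fun y ↦ g (m + 1) y + Real.exp (-y) * (y ^ (m + 1) / (m + 1)!) from
      funext (g_succ (m + 1))]
    refine (ih.add ((hasDerivAt_neg x).exp.mul
      ((hasDerivAt_pow (m + 1) x).div_const ((m + 1)! : ℝ)))).congr_deriv ?_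
    push_cast [Nat.factorial_succ]
    field_simp
    ring

lemma hasDerivAt_neg_g_succ_mul (m : ℕ) (r x : ℝ) :
    HasDerivAt (fun y ↦ -g (m + 1) (r * y)) (r ^ (m + 1) / m ! * x ^ m * Real.exp (-(r * x))) x :=
  ((hasDerivAt_g_succ m (r * x)).comp x ((hasDerivAt_id x).const_mul r)).neg.congr_deriv
    (by rw [mul_pow]; ring)

lemma gammaPDFReal_natCast_add_one_of_nonneg (m : ℕ) (r : ℝ) {x : ℝ} (hx : 0 ≤ x) :
    gammaPDFReal (m + 1) r x = r ^ (m + 1) / m ! * x ^ m * Real.exp (-(r * x)) := by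
  rw [gammaPDFReal, if_pos hx, add_sub_cancel_right, Real.Gamma_nat_eq_factorial,
    ← Nat.cast_succ, Real.rpow_natCast, Real.rpow_natCast]

lemma measureReal_gammaMeasure {a r : ℝ} (ha : 0 < a) (hr : 0 < r) {s : Set ℝ}
    (hs : MeasurableSet s) : (gammaMeasure a r).real s = ∫ x in s, gammaPDFReal a r x := by
  rw [measureReal_def, gammaMeasure, withDensity_apply _ hs]
  refine (integral_eq_lintegral_of_nonneg_ae ?_ (by fun_prop)).symm
  exact ae_of_all _ (gammaPDFReal_nonneg ha hr)

lemma measureReal_gammaMeasure_Ioo (m : ℕ) {r a b : ℝ} (hr : 0 < r) (ha : 0 ≤ a) (hab : a ≤ b) :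
    (gammaMeasure (m + 1) r).real (Ioo a b) = g (m + 1) (r * a) - g (m + 1) (r * b) := by
  rw [measureReal_gammaMeasure (by positivity) hr measurableSet_Ioo,
    setIntegral_congr_fun measurableSet_Ioo
      (fun x hx ↦ gammaPDFReal_natCast_add_one_of_nonneg m r (ha.trans hx.1.le)),
    ← integral_Ioc_eq_integral_Ioo, ← intervalIntegral.integral_of_le hab,
    intervalIntegral.integral_eq_sub_of_hasDerivAt (fun x _ ↦ hasDerivAt_neg_g_succ_mul m r x)
      (Continuous.intervalIntegrable (by fun_prop) a b)]
  ring

lemma gammaPDF_mul_exponentialPDF_sub (m : ℕ) {r t : ℝ} (hr : 0 ≤ r) (y : ℝ) :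
    gammaPDF (m + 1) r y * exponentialPDF r (t - y)
      = (Icc 0 t).indicator
          (fun y ↦ ENNReal.ofReal (r ^ (m + 2) / m ! * Real.exp (-(r * t)) * y ^ m)) y := by
  by_cases hy : y ∈ Icc 0 t
  · have hy0 : 0 ≤ y := hy.1
    rw [indicator_of_mem hy, gammaPDF, gammaPDFReal_natCast_add_one_of_nonneg m r hy0,
      exponentialPDF_of_nonneg (sub_nonneg.2 hy.2), ← ENNReal.ofReal_mul (by positivity)]
    congr 1
    rw [show -(r * t) = -(r * y) + -(r * (t - y)) by ring, Real.exp_add]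
    ring
  · rw [indicator_of_notMem hy]
    rcases not_and_or.1 hy with hy | hy
    · rw [gammaPDF_of_neg (not_le.1 hy), zero_mul]
    · rw [exponentialPDF_of_neg (sub_neg.2 (not_le.1 hy)), mul_zero]

lemma gammaPDF_lconvolution_exponentialPDF (m : ℕ) {r : ℝ} (hr : 0 ≤ r) :
    gammaPDF (m + 1) r ⋆ₗ exponentialPDF r = gammaPDF (m + 1 + 1) r := by
  funext t
  simp only [lconvolution_def, neg_add_eq_sub, gammaPDF_mul_exponentialPDF_sub m hr]
  rcases lt_or_ge t 0 with ht | ht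
  · rw [gammaPDF_of_neg ht, Icc_eq_empty (not_le.2 ht), indicator_empty, lintegral_zero]
  have hnonneg : 0 ≤ᵐ[volume.restrict (Icc 0 t)]
      fun y ↦ r ^ (m + 2) / m ! * Real.exp (-(r * t)) * y ^ m :=
    (ae_restrict_iff' measurableSet_Icc).2 (ae_of_all _ fun y hy ↦ by have := hy.1; positivity)
  rw [lintegral_indicator measurableSet_Icc,
    ← ofReal_integral_eq_lintegral_ofReal (Continuous.integrableOn_Icc (by fun_prop)) hnonneg,
    integral_Icc_eq_integral_Ioc, ← intervalIntegral.integral_of_le ht,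
    intervalIntegral.integral_const_mul, integral_pow, gammaPDF, ← Nat.cast_succ,
    gammaPDFReal_natCast_add_one_of_nonneg (m + 1) r ht]
  congr 1
  push_cast [Nat.factorial_succ]
  field_simp
  ring

lemma gammaMeasure_conv_expMeasure (m : ℕ) {r : ℝ} (hr : 0 ≤ r) :
    gammaMeasure (m + 1) r ∗ expMeasure r = gammaMeasure (m + 1 + 1) r :=
  (conv_withDensity_eq_lconvolution (measurable_gammaPDFReal _ _).ennreal_ofReal
    (measurable_gammaPDFReal _ _).ennreal_ofReal).trans
    (congrArg _ (gammaPDF_lconvolution_exponentialPDF m hr))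

lemma hasLaw_sum_gammaMeasure {Ω ι : Type*} {mΩ : MeasurableSpace Ω} {P : Measure Ω}
    {X : ι → Ω → ℝ} {r : ℝ} (hr : 0 < r) (hX : ∀ i, HasLaw (X i) (expMeasure r) P)
    (hindep : iIndepFun X P) {s : Finset ι} (hs : s.Nonempty) :
    HasLaw (fun ω ↦ ∑ i ∈ s, X i ω) (gammaMeasure s.card r) P := by
  induction hs using Finset.Nonempty.cons_induction with
  | singleton a => simpa [expMeasure] using hX a
  | cons a s ha hs ih =>
    obtain ⟨m, hm⟩ := Nat.exists_eq_add_one.2 hs.card_pos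
    rw [hm, Nat.cast_succ] at ih
    have := isProbabilityMeasure_expMeasure hr
    have := isProbabilityMeasure_gammaMeasure (a := m + 1) (by positivity) hr
    have hindep_sum : IndepFun (fun ω ↦ ∑ i ∈ s, X i ω) (X a) P := by
      simpa only [Finset.sum_fn] using
        hindep.indepFun_finsetSum_of_notMem₀ (fun i ↦ (hX i).aemeasurable) ha
    simpa [Finset.sum_cons, add_comm, hm, gammaMeasure_conv_expMeasure m hr.le] using
      hindep_sum.hasLaw_fun_add ih (hX a)

lemma abs_div_sub_div_lt_iff_mem_Ioo {n lam ε s : ℝ} (hn : 0 < n) (hlam : 0 < lam) (hε : |ε| < 1) :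
    |n / s - lam| / lam < ε ↔ s ∈ Ioo (n / (1 + ε) / lam) (n / (1 - ε) / lam) := by
  obtain ⟨hε₁, hε₂⟩ := abs_lt.1 hε
  have hlo : 0 < lam * (1 - ε) := by nlinarith
  have hhi : 0 < lam * (1 + ε) := by nlinarith
  rw [div_lt_iff₀ hlam, abs_lt, div_div, div_div, mul_comm (1 + ε), mul_comm (1 - ε)]
  constructor
  · rintro ⟨h₁, h₂⟩
    have hs : 0 < s := (div_pos_iff_of_pos_left hn).1 (by nlinarith)
    exact ⟨(div_lt_comm₀ hs hhi).1 (by linarith), (lt_div_comm₀ hlo hs).1 (by linarith)⟩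
  · rintro ⟨h₁, h₂⟩
    have hs : 0 < s := (div_pos hn hhi).trans h₁
    have := (div_lt_comm₀ hs hhi).2 h₁
    have := (lt_div_comm₀ hlo hs).2 h₂
    constructor <;> linarith

theorem arrival_rate_estimate_prob_eq_general
    {Ω : Type*} [MeasureSpace Ω]
    (n : ℕ) (hn : 0 < n) (lam : ℝ) (hlam : 0 < lam)
    (X : Fin n → Ω → ℝ) (hmeas : ∀ i, Measurable (X i))
    (hindep : iIndepFun X ℙ)
    (hdist : ∀ i, Measure.map (X i) ℙ = expMeasure lam)
    (ε : ℝ) (hε : ε ∈ Set.Ioo (0 : ℝ) 1) :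
    (ℙ {ω | |(n : ℝ) / (∑ i, X i ω) - lam| / lam < ε}).toReal
      = g n ((n : ℝ) / (1 + ε)) - g n ((n : ℝ) / (1 - ε)) := by
  obtain ⟨hε₀, hε₁⟩ := hε
  obtain ⟨m, rfl⟩ := Nat.exists_eq_add_one.2 hn
  have hlaw : HasLaw (fun ω ↦ ∑ i, X i ω) (gammaMeasure (m + 1) lam) ℙ := by
    simpa using hasLaw_sum_gammaMeasure hlam (fun i ↦ ⟨(hmeas i).aemeasurable, hdist i⟩) hindep
      Finset.univ_nonempty
  have hlo : 0 ≤ ((m : ℝ) + 1) / (1 + ε) / lam :=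
    div_nonneg (div_nonneg (by positivity) (by linarith)) hlam.le
  have hab : ((m : ℝ) + 1) / (1 + ε) / lam ≤ ((m : ℝ) + 1) / (1 - ε) / lam := by
    gcongr; linarith
  simp_rw [abs_div_sub_div_lt_iff_mem_Ioo (Nat.cast_pos.2 hn) hlam (abs_lt.2 ⟨by linarith, hε₁⟩)]
  rw [← measureReal_def, hlaw.measureReal_eq (p := (· ∈ Ioo _ _)) measurableSet_Ioo,
    ofPred_mem_eq, Nat.cast_succ, measureReal_gammaMeasure_Ioo m hlam hlo hab,
    mul_div_cancel₀ _ hlam.ne', mul_div_cancel₀ _ hlam.ne']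

/-- If `X₁, …, Xₙ` are i.i.d. exponential with rate `λ > 0` (interarrival times of a
Poisson process with arrival rate `λ`) and `λ̂ = n / ∑ Xᵢ`, then for every `ε ∈ (0,1)`,
`Pr{|λ̂ - λ|/λ < ε} = g(n, n/(1+ε)) - g(n, n/(1-ε))`. -/
theorem arrival_rate_estimate_prob_eq
    {Ω : Type*} [MeasureSpace Ω] [IsProbabilityMeasure (ℙ : Measure Ω)]
    (n : ℕ) (hn : 0 < n) (lam : ℝ) (hlam : 0 < lam)
    (X : Fin n → Ω → ℝ) (hmeas : ∀ i, Measurable (X i))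
    (hindep : iIndepFun X ℙ)
    (hdist : ∀ i, Measure.map (X i) ℙ = expMeasure lam)
    (ε : ℝ) (hε : ε ∈ Set.Ioo (0 : ℝ) 1) :
    (ℙ {ω | |(n : ℝ) / (∑ i, X i ω) - lam| / lam < ε}).toReal
      = g n ((n : ℝ) / (1 + ε)) - g n ((n : ℝ) / (1 - ε)) :=
  arrival_rate_estimate_prob_eq_general n hn lam hlam X hmeas hindep hdist ε hε
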